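/- arXiv:2312.15845 — 4 statements merged into one kernel-verified Lean document; each statement's English description precedes it below -/
import Mathlib

section
/- Suppose g : ℝ^d → ℝ is μ-strongly convex with μ ≥ 0, γ > 0, and z = prox_{γg}(x - γd) for some x, d ∈ ℝ^d. Then for every y ∈ ℝ^d, γ⟨d, z - y⟩ ≤ (1/2)‖x - y‖² - ((1+μγ)/2)‖z - y‖² - (1/2)‖z - x‖² - γ g(z) + γ g(y). -/
open scoped RealInnerProductSpace

set_option maxHeartbeats 1000000 in
theorem stmt3 (d : ℕ) (g : EuclideanSpace ℝ (Fin d) → ℝ) (μ γ : ℝ)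
    (hμ : 0 ≤ μ) (hγ : 0 < γ)
    (hg : StrongConvexOn Set.univ μ g)
    (x dvec y z : EuclideanSpace ℝ (Fin d))
    (hz : ∀ u, γ * g z + (1 / 2) * ‖z - (x - γ • dvec)‖ ^ 2 ≤
      γ * g u + (1 / 2) * ‖u - (x - γ • dvec)‖ ^ 2) :
    γ * ⟪dvec, z - y⟫ ≤
      (1 / 2) * ‖x - y‖ ^ 2 - ((1 + μ * γ) / 2) * ‖z - y‖ ^ 2 -
        (1 / 2) * ‖z - x‖ ^ 2 - γ * g z + γ * g y := by
  set w : EuclideanSpace ℝ (Fin d) := x - γ • dvec with hw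
  set K : ℝ := (γ * (μ / 2) + 1 / 2) * ‖y - z‖ ^ 2 with hK
  have hK0 : 0 ≤ K := by positivity
  -- pointwise inequality for each t ∈ (0,1)
  have key : ∀ t : ℝ, 0 < t → t < 1 →
      γ * g z + γ * (μ / 2) * ‖z - y‖ ^ 2 ≤ γ * g y + ⟪z - w, y - z⟫ + t * K := by
    intro t ht0 ht1
    have hcvx := hg.2 (Set.mem_univ z) (Set.mem_univ y)
      (by linarith : (0:ℝ) ≤ 1 - t) ht0.le (by ring)
    have hu := hz ((1 - t) • z + t • y)
    have hueq : (1 - t) • z + t • y - w = (z - w) + t • (y - z) := by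
      module
    have hnorm : ‖(1 - t) • z + t • y - w‖ ^ 2 =
        ‖z - w‖ ^ 2 + 2 * (t * ⟪z - w, y - z⟫) + t ^ 2 * ‖y - z‖ ^ 2 := by
      rw [hueq, norm_add_sq_real, real_inner_smul_right, norm_smul]
      simp [abs_of_pos ht0]
      ring
    have hzy : ‖z - y‖ = ‖y - z‖ := norm_sub_rev z y
    simp only [smul_eq_mul] at hcvx
    rw [hnorm] at hu
    have h2 : γ * g ((1 - t) • z + t • y) ≤
        γ * ((1 - t) * g z + t * g y - (1 - t) * t * (μ / 2 * ‖z - y‖ ^ 2)) := by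
      nlinarith [hcvx]
    have h3 : γ * g z ≤ γ * ((1 - t) * g z + t * g y - (1 - t) * t * (μ / 2 * ‖z - y‖ ^ 2))
        + (t * ⟪z - w, y - z⟫) + t ^ 2 / 2 * ‖y - z‖ ^ 2 := by
      nlinarith [hu, h2]
    -- divide by t
    rw [hK, hzy] at *
    nlinarith [h3, mul_pos hγ ht0]
  have grad : γ * g z + γ * (μ / 2) * ‖z - y‖ ^ 2 ≤ γ * g y + ⟪z - w, y - z⟫ := by
    refine le_of_forall_pos_le_add fun ε hε => ?_
    set t : ℝ := min (ε / (K + 1)) (1 / 2) with htdef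
    have ht0 : 0 < t := lt_min (by positivity) (by norm_num)
    have ht1 : t < 1 := lt_of_le_of_lt (min_le_right _ _) (by norm_num)
    have htK : t * K ≤ ε := by
      calc t * K ≤ (ε / (K + 1)) * K := by
            apply mul_le_mul_of_nonneg_right (min_le_left _ _) hK0
        _ ≤ ε := by
            rw [div_mul_eq_mul_div, div_le_iff₀ (by linarith)]
            nlinarith
    linarith [key t ht0 ht1]
  -- now algebra: expand inner products
  have hinner : ⟪z - w, y - z⟫ = ⟪z - x, y - z⟫ + γ * ⟪dvec, y - z⟫ := by
    rw [hw]
    have : z - (x - γ • dvec) = (z - x) + γ • dvec := by module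
    rw [this, inner_add_left, real_inner_smul_left]
  have hxy : ‖x - y‖ ^ 2 = ‖z - y‖ ^ 2 + 2 * ⟪z - x, z - y⟫ * (-1) + ‖z - x‖ ^ 2 := by
    have : x - y = (z - y) - (z - x) := by module
    rw [this, norm_sub_sq_real, real_inner_comm]
    ring
  have hflip : ⟪z - x, y - z⟫ = - ⟪z - x, z - y⟫ := by
    rw [← inner_neg_right]; congr 1; module
  have hflip2 : ⟪dvec, y - z⟫ = - ⟪dvec, z - y⟫ := by
    rw [← inner_neg_right]; congr 1; module
  rw [hinner, hflip, hflip2] at grad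
  nlinarith [grad, hxy]
end

section
/- Let g : ℝ^d → ℝ be convex (possibly nonsmooth) and γ > 0. For a matrix x ∈ ℝ^{m×d} with rows x^{(i)}, define the row-wise proximal operator prox_{γg}(x) whose i-th row is prox_{γg}(x^{(i)}), and let Π = I_m - (1/m)𝟙𝟙^⊤ be the projection onto the consensus complement. Then ‖prox_{γg}((1/m)𝟙𝟙^⊤ x) - (1/m)𝟙𝟙^⊤ prox_{γg}(x)‖ ≤ ‖Πx‖, where ‖·‖ is the Frobenius norm. -/
/-!
The optimality of `p v = prox_{γg}(v)` against the segment from `p v` to `w`, together with the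
convexity of `g`, gives in the limit the inequality `γ g(p v) ≤ γ g(w) + ⟪p v - v, w - p v⟫`.
Adding its instances at `(u, p v)` and `(v, p u)` shows that `p` is firmly nonexpansive, hence
1-Lipschitz. Every row of `prox(x̄) - avg prox(x)` equals the average of `p x̄ - p x_j`, so by
Jensen for `‖·‖²` and the Lipschitz bound its squared norm is at most the average of
`‖x_j - x̄‖²`; summing over the `m` rows gives the claim.
-/

open Finset Filter Topology

lemma le_of_forall_mem_Ioc_le_add_mul {a b c : ℝ}
    (h : ∀ t ∈ Set.Ioc (0 : ℝ) 1, a ≤ b + t * c) : a ≤ b := by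
  have hlim : Tendsto (fun t : ℝ => b + t * c) (𝓝[>] 0) (𝓝 b) :=
    ((by fun_prop : Continuous fun t : ℝ => b + t * c).tendsto' 0 b (by simp)).mono_left
      nhdsWithin_le_nhds
  exact ge_of_tendsto hlim (eventually_of_mem (Ioc_mem_nhdsGT one_pos) h)

lemma norm_inv_card_smul_sum_sq_le {ι E : Type*} [Fintype ι] [SeminormedAddCommGroup E]
    [NormedSpace ℝ E] (y : ι → E) :
    ‖(Fintype.card ι : ℝ)⁻¹ • ∑ i, y i‖ ^ 2 ≤ (Fintype.card ι : ℝ)⁻¹ * ∑ i, ‖y i‖ ^ 2 := by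
  set n : ℝ := (Fintype.card ι : ℝ)
  have hsum : (∑ i, ‖y i‖) ^ 2 ≤ n * ∑ i, ‖y i‖ ^ 2 := by
    simpa using sq_sum_le_card_mul_sum_sq (s := univ) (f := fun i => ‖y i‖)
  have hn : n⁻¹ * n ≤ 1 := inv_mul_le_one_of_le₀ le_rfl (by positivity)
  calc ‖n⁻¹ • ∑ i, y i‖ ^ 2 ≤ n⁻¹ ^ 2 * (∑ i, ‖y i‖) ^ 2 := by
        rw [norm_smul, mul_pow, Real.norm_of_nonneg (by positivity)]
        gcongr
        exact norm_sum_le _ _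
    _ ≤ n⁻¹ ^ 2 * (n * ∑ i, ‖y i‖ ^ 2) := by gcongr
    _ = n⁻¹ * (n⁻¹ * n * ∑ i, ‖y i‖ ^ 2) := by ring
    _ ≤ n⁻¹ * ∑ i, ‖y i‖ ^ 2 := by
        gcongr
        exact mul_le_of_le_one_left (sum_nonneg fun i _ => sq_nonneg _) hn

section Prox

variable {E : Type*} [NormedAddCommGroup E] [InnerProductSpace ℝ E]

def IsProx (γ : ℝ) (g : E → ℝ) (p : E → E) : Prop :=
  ∀ v u, γ * g (p v) + (1 / 2) * ‖p v - v‖ ^ 2 ≤ γ * g u + (1 / 2) * ‖u - v‖ ^ 2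

namespace IsProx

variable {γ : ℝ} {g : E → ℝ} {p : E → E}

theorem le_add_inner (hp : IsProx γ g p) (hg : ConvexOn ℝ Set.univ g) (hγ : 0 ≤ γ) (v w : E) :
    γ * g (p v) ≤ γ * g w + inner ℝ (p v - v) (w - p v) := by
  refine le_of_forall_mem_Ioc_le_add_mul (c := ‖w - p v‖ ^ 2 / 2) fun t ⟨ht, ht1⟩ => ?_
  have hmin := hp v (p v + t • (w - p v))
  have hconv : g (p v + t • (w - p v)) ≤ (1 - t) * g (p v) + t * g w := by
    have := hg.2 (Set.mem_univ (p v)) (Set.mem_univ w) (sub_nonneg.2 ht1) ht.le (by ring)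
    rwa [show (1 - t) • p v + t • w = p v + t • (w - p v) by module] at this
  have hexpand : ‖p v + t • (w - p v) - v‖ ^ 2
      = ‖p v - v‖ ^ 2 + 2 * t * inner ℝ (p v - v) (w - p v) + t ^ 2 * ‖w - p v‖ ^ 2 := by
    rw [add_sub_right_comm, norm_add_sq_real, real_inner_smul_right, norm_smul,
      Real.norm_of_nonneg ht.le]
    ring
  rw [hexpand] at hmin
  -- `hmin` and `hconv` combine to `t * (γ * g (p v)) ≤ t * (rhs + t * c)`; divide by `t`.
  nlinarith [mul_le_mul_of_nonneg_left hconv hγ]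

theorem norm_sub_sq_le_inner (hp : IsProx γ g p) (hg : ConvexOn ℝ Set.univ g) (hγ : 0 ≤ γ)
    (u v : E) : ‖p u - p v‖ ^ 2 ≤ inner ℝ (u - v) (p u - p v) := by
  have hu := hp.le_add_inner hg hγ u (p v)
  have hv := hp.le_add_inner hg hγ v (p u)
  have hid : inner ℝ (u - v) (p u - p v) - ‖p u - p v‖ ^ 2
      = inner ℝ (p u - u) (p v - p u) + inner ℝ (p v - v) (p u - p v) := by
    rw [← real_inner_self_eq_norm_sq]
    simp only [inner_sub_left, inner_sub_right, real_inner_comm (p u) (p v)]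
    ring
  linarith

theorem lipschitzWith_one (hp : IsProx γ g p) (hg : ConvexOn ℝ Set.univ g) (hγ : 0 ≤ γ) :
    LipschitzWith 1 p := by
  refine LipschitzWith.mk_one fun u v => ?_
  rw [dist_eq_norm, dist_eq_norm]
  have h := (hp.norm_sub_sq_le_inner hg hγ u v).trans (real_inner_le_norm _ _)
  rw [sq] at h
  rcases (norm_nonneg (p u - p v)).eq_or_lt with h0 | h0
  · rw [← h0]; exact norm_nonneg _
  · exact le_of_mul_le_mul_right h h0

end IsProx

end Prox

theorem LipschitzWith.mul_norm_sub_average_sq_le {E : Type*} [SeminormedAddCommGroup E]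
    [NormedSpace ℝ E] {f : E → E} (hf : LipschitzWith 1 f) {m : ℕ} (x : Fin m → E) :
    m * ‖f ((m : ℝ)⁻¹ • ∑ j, x j) - (m : ℝ)⁻¹ • ∑ j, f (x j)‖ ^ 2 ≤
      ∑ i, ‖x i - (m : ℝ)⁻¹ • ∑ j, x j‖ ^ 2 := by
  rcases Nat.eq_zero_or_pos m with rfl | hm
  · simp
  set xbar := (m : ℝ)⁻¹ • ∑ j, x j
  have hdiff : f xbar - (m : ℝ)⁻¹ • ∑ j, f (x j) = (m : ℝ)⁻¹ • ∑ j, (f xbar - f (x j)) := by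
    rw [sum_sub_distrib, smul_sub, sum_const, card_univ, Fintype.card_fin,
      ← Nat.cast_smul_eq_nsmul ℝ, smul_smul, inv_mul_cancel₀ (by positivity), one_smul]
  have hlip (j : Fin m) : ‖f xbar - f (x j)‖ ≤ ‖x j - xbar‖ := by
    simpa [dist_eq_norm, norm_sub_rev] using hf.dist_le_mul xbar (x j)
  calc (m : ℝ) * ‖f xbar - (m : ℝ)⁻¹ • ∑ j, f (x j)‖ ^ 2
      ≤ m * ((m : ℝ)⁻¹ * ∑ j, ‖f xbar - f (x j)‖ ^ 2) := by
        rw [hdiff]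
        gcongr
        simpa using norm_inv_card_smul_sum_sq_le fun j => f xbar - f (x j)
    _ = ∑ j, ‖f xbar - f (x j)‖ ^ 2 := by field_simp
    _ ≤ ∑ j, ‖x j - xbar‖ ^ 2 := by gcongr with j; exact hlip j

theorem stmt5_general (d m : ℕ) (g : EuclideanSpace ℝ (Fin d) → ℝ)
    (hg : ConvexOn ℝ Set.univ g) (γ : ℝ) (hγ : 0 < γ)
    (p : EuclideanSpace ℝ (Fin d) → EuclideanSpace ℝ (Fin d))
    (hp : ∀ v u, γ * g (p v) + (1 / 2) * ‖p v - v‖ ^ 2 ≤ γ * g u + (1 / 2) * ‖u - v‖ ^ 2)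
    (x : Fin m → EuclideanSpace ℝ (Fin d)) :
    Real.sqrt (∑ i : Fin m,
        ‖p ((m : ℝ)⁻¹ • ∑ j : Fin m, x j) - (m : ℝ)⁻¹ • ∑ j : Fin m, p (x j)‖ ^ 2) ≤
      Real.sqrt (∑ i : Fin m, ‖x i - (m : ℝ)⁻¹ • ∑ j : Fin m, x j‖ ^ 2) := by
  have hprox : IsProx γ g p := hp
  apply Real.sqrt_le_sqrt
  rw [sum_const, card_univ, Fintype.card_fin, nsmul_eq_mul]
  exact (hprox.lipschitzWith_one hg hγ.le).mul_norm_sub_average_sq_le x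

theorem stmt5 (d m : ℕ) (hm : 0 < m) (g : EuclideanSpace ℝ (Fin d) → ℝ)
    (hg : ConvexOn ℝ Set.univ g) (γ : ℝ) (hγ : 0 < γ)
    (p : EuclideanSpace ℝ (Fin d) → EuclideanSpace ℝ (Fin d))
    (hp : ∀ v u, γ * g (p v) + (1 / 2) * ‖p v - v‖ ^ 2 ≤ γ * g u + (1 / 2) * ‖u - v‖ ^ 2)
    (x : Fin m → EuclideanSpace ℝ (Fin d)) :
    Real.sqrt (∑ i : Fin m,
        ‖p ((m : ℝ)⁻¹ • ∑ j : Fin m, x j) - (m : ℝ)⁻¹ • ∑ j : Fin m, p (x j)‖ ^ 2) ≤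
      Real.sqrt (∑ i : Fin m, ‖x i - (m : ℝ)⁻¹ • ∑ j : Fin m, x j‖ ^ 2) :=
  stmt5_general d m g hg γ hγ p hp x
end

section
/- Let each f_i : ℝ^d → ℝ (i = 1,…,m) be L-smooth. With the notation f(x̄, X) = (1/m)Σᵢ [ f_i(x^{(i)}) + ⟨∇f_i(x^{(i)}), x̄ - x^{(i)}⟩ ], s̄ = (1/m)Σᵢ ∇f_i(x^{(i)}), and x̄ = (1/m)Σᵢ x^{(i)}, it holds for all w ∈ ℝ^d that (1/m)Σᵢ f_i(w) ≤ f(x̄, X) + ⟨s̄, w - x̄⟩ + (L/2)‖w - x̄‖² + (L/(2m))‖ΠX‖², where ΠX = X - (1/m)𝟙𝟙^⊤X and ‖·‖ is the Frobenius norm. -/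
open Finset
open scoped RealInnerProductSpace

theorem stmt9 (d m : ℕ) (hm : 0 < m)
    (f : Fin m → EuclideanSpace ℝ (Fin d) → ℝ)
    (f' : Fin m → EuclideanSpace ℝ (Fin d) → EuclideanSpace ℝ (Fin d))
    (L : ℝ) (hL : 0 < L)
    (hsmooth : ∀ i u v, f i v ≤ f i u + ⟪f' i u, v - u⟫ + (L / 2) * ‖v - u‖ ^ 2)
    (X : Fin m → EuclideanSpace ℝ (Fin d)) (xbar : EuclideanSpace ℝ (Fin d))
    (hxbar : xbar = (m : ℝ)⁻¹ • ∑ i : Fin m, X i) :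
    ∀ w : EuclideanSpace ℝ (Fin d),
      (m : ℝ)⁻¹ * ∑ i : Fin m, f i w ≤
        (m : ℝ)⁻¹ * (∑ i : Fin m, (f i (X i) + ⟪f' i (X i), xbar - X i⟫)) +
          ⟪(m : ℝ)⁻¹ • ∑ i : Fin m, f' i (X i), w - xbar⟫ +
          (L / 2) * ‖w - xbar‖ ^ 2 +
          (L / (2 * m)) * ∑ i : Fin m, ‖X i - xbar‖ ^ 2 := by
  intro w
  have hm' : (m : ℝ) ≠ 0 := Nat.cast_ne_zero.mpr hm.ne'
  have hXsum : (∑ i : Fin m, X i) = (m : ℝ) • xbar := by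
    rw [hxbar, smul_smul, mul_inv_cancel₀ hm', one_smul]
  have hterm : ∀ i : Fin m, f i w ≤ (f i (X i) + ⟪f' i (X i), xbar - X i⟫) +
      ⟪f' i (X i), w - xbar⟫ + (L / 2) * ‖w - xbar‖ ^ 2 +
      L * ⟪w - xbar, xbar - X i⟫ + (L / 2) * ‖X i - xbar‖ ^ 2 := by
    intro i
    have h := hsmooth i (X i) w
    have hw : w - X i = (w - xbar) + (xbar - X i) := by abel
    rw [hw, inner_add_right, norm_add_sq_real, norm_sub_rev xbar (X i)] at h
    nlinarith [h]
  have h3 : (∑ i : Fin m, (xbar - X i)) = 0 := by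
    rw [Finset.sum_sub_distrib, hXsum, Finset.sum_const, Finset.card_univ,
      Fintype.card_fin, Nat.cast_smul_eq_nsmul ℝ, sub_self]
  have hsumineq : (∑ i : Fin m, f i w) ≤
      (∑ i : Fin m, (f i (X i) + ⟪f' i (X i), xbar - X i⟫)) +
      ⟪∑ i : Fin m, f' i (X i), w - xbar⟫ + (m : ℝ) * ((L / 2) * ‖w - xbar‖ ^ 2) +
      (L / 2) * ∑ i : Fin m, ‖X i - xbar‖ ^ 2 := by
    have h1 := Finset.sum_le_sum (s := Finset.univ) (fun i _ => hterm i)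
    have hB : (∑ i : Fin m, ⟪f' i (X i), w - xbar⟫) = ⟪∑ i : Fin m, f' i (X i), w - xbar⟫ :=
      (sum_inner _ _ _).symm
    have hC : (∑ _i : Fin m, (L / 2) * ‖w - xbar‖ ^ 2) = (m : ℝ) * ((L / 2) * ‖w - xbar‖ ^ 2) := by
      rw [Finset.sum_const, Finset.card_univ, Fintype.card_fin, nsmul_eq_mul]
    have hD : (∑ i : Fin m, L * ⟪w - xbar, xbar - X i⟫) = 0 := by
      rw [← Finset.mul_sum, ← inner_sum, h3, inner_zero_right, mul_zero]
    have hS : (∑ i : Fin m, (L / 2) * ‖X i - xbar‖ ^ 2) =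
        (L / 2) * ∑ i : Fin m, ‖X i - xbar‖ ^ 2 := (Finset.mul_sum _ _ _).symm
    simp only [Finset.sum_add_distrib] at h1 ⊢
    linarith [h1, hB, hC, hD, hS]
  have hinv : (0:ℝ) ≤ (m : ℝ)⁻¹ := by positivity
  have h4 := mul_le_mul_of_nonneg_left hsumineq hinv
  rw [real_inner_smul_left]
  have e1 : (m:ℝ)⁻¹ * ((m : ℝ) * ((L / 2) * ‖w - xbar‖ ^ 2)) = (L / 2) * ‖w - xbar‖ ^ 2 := by
    field_simp
  have ec : (m:ℝ)⁻¹ * (L / 2) = L / (2 * m) := by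
    rw [inv_mul_eq_div, div_div, mul_comm]
  have e2 : (m:ℝ)⁻¹ * ((L / 2) * ∑ i : Fin m, ‖X i - xbar‖ ^ 2) =
      (L / (2 * m)) * ∑ i : Fin m, ‖X i - xbar‖ ^ 2 := by
    rw [← mul_assoc, ec]
  rw [mul_add, mul_add, mul_add, e1, e2] at h4
  linarith [h4]
end

section
/- Let f_i : ℝ^d → ℝ be convex and L-smooth for i = 1,…,m, and let X, X' ∈ ℝ^{m×d} with rows x^{(i)}, x'^{(i)} and row averages x̄, x̄'. Let ȳ ∈ ℝ^d. Then Σᵢ ‖∇f_i(x'^{(i)}) - ∇f_i(x^{(i)})‖² ≤ 4mL·D_f(ȳ, X') + 4mL²‖x̄ - ȳ‖² + 4L²‖ΠX‖², where D_f(ȳ, X') = (1/m)Σᵢ [ f_i(ȳ) - f_i(x'^{(i)}) - ⟨∇f_i(x'^{(i)}), ȳ - x'^{(i)}⟩ ] and ΠX = X - 𝟙x̄. -/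
/-!
Co-coercivity at `x'ⁱ` bounds `‖∇fᵢ(ȳ) - ∇fᵢ(x'ⁱ)‖²` by `2L` times the Bregman term, and
Lipschitz continuity bounds `‖∇fᵢ(xⁱ) - ∇fᵢ(ȳ)‖` by `L(‖xⁱ - x̄‖ + ‖x̄ - ȳ‖)`. Inserting `ȳ`
between `x'ⁱ` and `xⁱ` and using `‖a + b‖² ≤ 2‖a‖² + 2‖b‖²` twice gives the bound for each
`i`, and summing over `i` gives the theorem.
-/

open Finset
open scoped RealInnerProductSpace

theorem norm_sub_sq_le_two_mul_add {E : Type*} [SeminormedAddCommGroup E] (a b c : E) :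
    ‖a - c‖ ^ 2 ≤ 2 * ‖a - b‖ ^ 2 + 2 * ‖b - c‖ ^ 2 :=
  calc ‖a - c‖ ^ 2 ≤ (‖a - b‖ + ‖b - c‖) ^ 2 := by
        gcongr; exact norm_sub_le_norm_sub_add_norm_sub a b c
    _ ≤ 2 * ‖a - b‖ ^ 2 + 2 * ‖b - c‖ ^ 2 := by linarith [add_sq_le (a := ‖a - b‖) (b := ‖b - c‖)]

theorem sq_norm_grad_sub_le {E : Type*} [NormedAddCommGroup E] [InnerProductSpace ℝ E]
    {f : E → ℝ} {f' : E → E} {L : ℝ}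
    (hbreg : ∀ u v, ‖f' u - f' v‖ ^ 2 ≤ 2 * L * (f u - f v - ⟪f' v, u - v⟫))
    (hlip : ∀ u v, ‖f' u - f' v‖ ≤ L * ‖u - v‖) (x x' xbar y : E) :
    ‖f' x' - f' x‖ ^ 2 ≤
      4 * L * (f y - f x' - ⟪f' x', y - x'⟫) + 4 * L ^ 2 * ‖xbar - y‖ ^ 2 +
        4 * L ^ 2 * ‖x - xbar‖ ^ 2 := by
  have hlip_sq : ‖f' y - f' x‖ ^ 2 ≤ L ^ 2 * ‖x - y‖ ^ 2 := by
    rw [norm_sub_rev, ← mul_pow]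
    exact pow_le_pow_left₀ (norm_nonneg _) (hlip x y) 2
  calc ‖f' x' - f' x‖ ^ 2 ≤ 2 * ‖f' x' - f' y‖ ^ 2 + 2 * ‖f' y - f' x‖ ^ 2 :=
        norm_sub_sq_le_two_mul_add _ _ _
    _ ≤ 2 * (2 * L * (f y - f x' - ⟪f' x', y - x'⟫)) + 2 * (L ^ 2 * ‖x - y‖ ^ 2) := by
        rw [norm_sub_rev]; gcongr; exact hbreg y x'
    _ ≤ 2 * (2 * L * (f y - f x' - ⟪f' x', y - x'⟫)) +
          2 * (L ^ 2 * (2 * ‖x - xbar‖ ^ 2 + 2 * ‖xbar - y‖ ^ 2)) := by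
        gcongr; exact norm_sub_sq_le_two_mul_add _ _ _
    _ = _ := by ring

theorem stmt10_general (d m : ℕ) (hm : 0 < m)
    (f : Fin m → EuclideanSpace ℝ (Fin d) → ℝ)
    (f' : Fin m → EuclideanSpace ℝ (Fin d) → EuclideanSpace ℝ (Fin d))
    (L : ℝ)
    (hbreg : ∀ i u v, ‖f' i u - f' i v‖ ^ 2 ≤ 2 * L * (f i u - f i v - ⟪f' i v, u - v⟫))
    (hlip : ∀ i u v, ‖f' i u - f' i v‖ ≤ L * ‖u - v‖)
    (X X' : Fin m → EuclideanSpace ℝ (Fin d))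
    (xbar : EuclideanSpace ℝ (Fin d))
    (ybar : EuclideanSpace ℝ (Fin d)) :
    ∑ i : Fin m, ‖f' i (X' i) - f' i (X i)‖ ^ 2 ≤
      4 * m * L *
          ((m : ℝ)⁻¹ * ∑ i : Fin m, (f i ybar - f i (X' i) - ⟪f' i (X' i), ybar - X' i⟫)) +
        4 * m * L ^ 2 * ‖xbar - ybar‖ ^ 2 +
        4 * L ^ 2 * ∑ i : Fin m, ‖X i - xbar‖ ^ 2 := by
  have hm' : (m : ℝ) ≠ 0 := Nat.cast_ne_zero.mpr hm.ne'
  calc ∑ i : Fin m, ‖f' i (X' i) - f' i (X i)‖ ^ 2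
      ≤ ∑ i : Fin m, (4 * L * (f i ybar - f i (X' i) - ⟪f' i (X' i), ybar - X' i⟫) +
          4 * L ^ 2 * ‖xbar - ybar‖ ^ 2 + 4 * L ^ 2 * ‖X i - xbar‖ ^ 2) :=
        sum_le_sum fun i _ => sq_norm_grad_sub_le (hbreg i) (hlip i) (X i) (X' i) xbar ybar
    _ = _ := by
        simp only [sum_add_distrib, ← mul_sum, sum_const, card_univ, Fintype.card_fin,
          nsmul_eq_mul]
        field_simp

theorem stmt10 (d m : ℕ) (hm : 0 < m)
    (f : Fin m → EuclideanSpace ℝ (Fin d) → ℝ)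
    (f' : Fin m → EuclideanSpace ℝ (Fin d) → EuclideanSpace ℝ (Fin d))
    (L : ℝ) (hL : 0 < L)
    (hbreg : ∀ i u v, ‖f' i u - f' i v‖ ^ 2 ≤ 2 * L * (f i u - f i v - ⟪f' i v, u - v⟫))
    (hlip : ∀ i u v, ‖f' i u - f' i v‖ ≤ L * ‖u - v‖)
    (X X' : Fin m → EuclideanSpace ℝ (Fin d))
    (xbar : EuclideanSpace ℝ (Fin d))
    (hxbar : xbar = (m : ℝ)⁻¹ • ∑ i : Fin m, X i)
    (ybar : EuclideanSpace ℝ (Fin d)) :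
    ∑ i : Fin m, ‖f' i (X' i) - f' i (X i)‖ ^ 2 ≤
      4 * m * L *
          ((m : ℝ)⁻¹ * ∑ i : Fin m, (f i ybar - f i (X' i) - ⟪f' i (X' i), ybar - X' i⟫)) +
        4 * m * L ^ 2 * ‖xbar - ybar‖ ^ 2 +
        4 * L ^ 2 * ∑ i : Fin m, ‖X i - xbar‖ ^ 2 :=
  stmt10_general d m hm f f' L hbreg hlip X X' xbar ybar
end
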